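/- arXiv:2406.08937 — 4 statements merged into one kernel-verified Lean document; each statement's English description precedes it below -/
import Mathlib

section
/- Let C_* be a finite chain complex of finite-dimensional F-vector spaces with a combinatorial propagator G. Set C_even = ⊕_k C_{2k} and C_odd = ⊕_k C_{2k+1}, and let ∂ + G : C_even → C_odd denote the sum of all boundary maps ∂_{2k} : C_{2k} → C_{2k-1} and all propagator maps G : C_{2k} → C_{2k+1}. Then ∂ + G is a linear isomorphism from C_even to C_odd. -/
open DirectSum

/-- The component of the even-to-odd map `∂ + G` on the summand `C (2k)`:
it sends `x` to `G x ∈ C (2k+1)` plus (for `k ≥ 1`) `∂ x ∈ C (2k-1)`. -/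
noncomputable def pgComp (F : Type*) [Field F] (C : ℕ → Type*)
    [∀ i, AddCommGroup (C i)] [∀ i, Module F (C i)]
    (d : ∀ i, C (i + 1) →ₗ[F] C i) (G : ∀ i, C i →ₗ[F] C (i + 1)) :
    ∀ k : ℕ, C (2 * k) →ₗ[F] ⨁ j : ℕ, C (2 * j + 1)
  | 0 => (DirectSum.lof F ℕ (fun j => C (2 * j + 1)) 0).comp (G 0)
  | (k + 1) =>
      (DirectSum.lof F ℕ (fun j => C (2 * j + 1)) (k + 1)).comp (G (2 * (k + 1))) +
      ((DirectSum.lof F ℕ (fun j => C (2 * j + 1)) k).comp (d (2 * k + 1)) :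
        C (2 * (k + 1)) →ₗ[F] ⨁ j : ℕ, C (2 * j + 1))

/-- The map `∂ + G : C_even → C_odd`. -/
noncomputable def pgMap (F : Type*) [Field F] (C : ℕ → Type*)
    [∀ i, AddCommGroup (C i)] [∀ i, Module F (C i)]
    (d : ∀ i, C (i + 1) →ₗ[F] C i) (G : ∀ i, C i →ₗ[F] C (i + 1)) :
    (⨁ k : ℕ, C (2 * k)) →ₗ[F] ⨁ j : ℕ, C (2 * j + 1) :=
  DirectSum.toModule F ℕ _ (pgComp F C d G)

section Aux

variable (F : Type*) [Field F] (C : ℕ → Type*)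
    [∀ i, AddCommGroup (C i)] [∀ i, Module F (C i)]
    (d : ∀ i, C (i + 1) →ₗ[F] C i) (G : ∀ i, C i →ₗ[F] C (i + 1))

/-- odd-to-even map components -/
noncomputable def qgComp (k : ℕ) : C (2 * k + 1) →ₗ[F] ⨁ j : ℕ, C (2 * j) :=
  (DirectSum.lof F ℕ (fun j => C (2 * j)) (k + 1)).comp (G (2 * k + 1)) +
  (DirectSum.lof F ℕ (fun j => C (2 * j)) k).comp (d (2 * k))

noncomputable def qgMap : (⨁ j : ℕ, C (2 * j + 1)) →ₗ[F] ⨁ k : ℕ, C (2 * k) :=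
  DirectSum.toModule F ℕ _ (qgComp F C d G)

/-- nilpotent part on even -/
noncomputable def neMap : Module.End F (⨁ k : ℕ, C (2 * k)) :=
  DirectSum.toModule F ℕ _ (fun k =>
    (DirectSum.lof F ℕ (fun j => C (2 * j)) (k + 1)).comp
      ((G (2 * k + 1)).comp (G (2 * k))))

/-- nilpotent part on odd -/
noncomputable def noMap : Module.End F (⨁ j : ℕ, C (2 * j + 1)) :=
  DirectSum.toModule F ℕ _ (fun k =>
    (DirectSum.lof F ℕ (fun j => C (2 * j + 1)) (k + 1)).comp
      ((G (2 * (k + 1))).comp (G (2 * k + 1))))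

end Aux

/-- For a finite chain complex of finite-dimensional vector spaces with a
combinatorial propagator `G`, the map `∂ + G : C_even → C_odd` is an isomorphism. -/
theorem stmt_2 (F : Type*) [Field F] (n : ℕ) (C : ℕ → Type*)
    [∀ i, AddCommGroup (C i)] [∀ i, Module F (C i)]
    [∀ i, FiniteDimensional F (C i)]
    (hbdd : ∀ i, n < i → Subsingleton (C i))
    (d : ∀ i, C (i + 1) →ₗ[F] C i)
    (hcomplex : ∀ i, (d i).comp (d (i + 1)) = 0)
    (G : ∀ i, C i →ₗ[F] C (i + 1))
    (hG0 : (d 0).comp (G 0) = LinearMap.id)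
    (hG : ∀ i, (d (i + 1)).comp (G (i + 1)) + (G i).comp (d i) = LinearMap.id) :
    Function.Bijective (pgMap F C d G) := by
  have key1 : (qgMap F C d G).comp (pgMap F C d G)
      = LinearMap.id + neMap F C G := by
    apply DirectSum.linearMap_ext
    intro k
    ext x : 1
    match k, x with
    | 0, x =>
      simp only [pgMap, qgMap, neMap, pgComp, qgComp, DirectSum.toModule_lof, map_add,
        LinearMap.add_apply, LinearMap.comp_apply, LinearMap.id_apply]
      have h0 : (d (2 * 0)) ((G (2 * 0)) x) = x := by
        simpa using LinearMap.congr_fun hG0 x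
      have main :
          (DirectSum.lof F ℕ (fun j => C (2 * j)) (0 + 1))
              ((G (2 * 0 + 1)) ((G (2 * 0)) x)) +
            (DirectSum.lof F ℕ (fun j => C (2 * j)) 0) ((d (2 * 0)) ((G (2 * 0)) x)) =
          (DirectSum.lof F ℕ (fun j => C (2 * j)) 0) x +
            (DirectSum.lof F ℕ (fun j => C (2 * j)) (0 + 1))
              ((G (2 * 0 + 1)) ((G (2 * 0)) x)) := by
        rw [h0, add_comm]
      exact main
    | (k + 1), x =>
      simp only [pgMap, qgMap, neMap, pgComp, qgComp, DirectSum.toModule_lof, map_add,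
        LinearMap.add_apply, LinearMap.comp_apply, LinearMap.id_apply]
      have h1 : (d (2 * k + 1 + 1)) ((G (2 * k + 1 + 1)) x) +
          (G (2 * k + 1)) ((d (2 * k + 1)) x) = x := by
        have := LinearMap.congr_fun (hG (2 * k + 1)) x
        simpa using this
      have hcc : (d (2 * k)) ((d (2 * k + 1)) x) = 0 := by
        simpa using LinearMap.congr_fun (hcomplex (2 * k)) x
      have hbc :
          (DirectSum.lof F ℕ (fun j => C (2 * j)) (k + 1))
              ((d (2 * k + 1 + 1)) ((G (2 * k + 1 + 1)) x)) +
            (DirectSum.lof F ℕ (fun j => C (2 * j)) (k + 1))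
              ((G (2 * k + 1)) ((d (2 * k + 1)) x)) =
          (DirectSum.lof F ℕ (fun j => C (2 * j)) (k + 1)) x := by
        rw [← map_add]
        exact congrArg _ h1
      have main :
          (DirectSum.lof F ℕ (fun j => C (2 * j)) (k + 1 + 1))
              ((G (2 * (k + 1) + 1)) ((G (2 * (k + 1))) x)) +
            (DirectSum.lof F ℕ (fun j => C (2 * j)) (k + 1))
              ((d (2 * k + 1 + 1)) ((G (2 * k + 1 + 1)) x)) +
            ((DirectSum.lof F ℕ (fun j => C (2 * j)) (k + 1))
                ((G (2 * k + 1)) ((d (2 * k + 1)) x)) +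
              (DirectSum.lof F ℕ (fun j => C (2 * j)) k)
                ((d (2 * k)) ((d (2 * k + 1)) x))) =
          (DirectSum.lof F ℕ (fun j => C (2 * j)) (k + 1)) x +
            (DirectSum.lof F ℕ (fun j => C (2 * j)) (k + 1 + 1))
              ((G (2 * (k + 1) + 1)) ((G (2 * (k + 1))) x)) := by
        rw [hcc, map_zero, add_zero, add_assoc, hbc, add_comm]
      exact main
  have key2 : (pgMap F C d G).comp (qgMap F C d G)
      = LinearMap.id + noMap F C G := by
    apply DirectSum.linearMap_ext
    intro k
    ext y : 1
    match k, y with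
    | 0, y =>
      simp only [pgMap, qgMap, noMap, pgComp, qgComp, DirectSum.toModule_lof, map_add,
        LinearMap.add_apply, LinearMap.comp_apply, LinearMap.id_apply]
      have h1 : (d (2 * 0 + 1)) ((G (2 * 0 + 1)) y) +
          (G (2 * 0)) ((d (2 * 0)) y) = y := by
        have := LinearMap.congr_fun (hG (2 * 0)) y
        simpa using this
      have hbc :
          (DirectSum.lof F ℕ (fun j => C (2 * j + 1)) 0)
              ((d (2 * 0 + 1)) ((G (2 * 0 + 1)) y)) +
            (DirectSum.lof F ℕ (fun j => C (2 * j + 1)) 0)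
              ((G (2 * 0)) ((d (2 * 0)) y)) =
          (DirectSum.lof F ℕ (fun j => C (2 * j + 1)) 0) y := by
        rw [← map_add]
        exact congrArg _ h1
      have main :
          (DirectSum.lof F ℕ (fun j => C (2 * j + 1)) (0 + 1))
              ((G (2 * (0 + 1))) ((G (2 * 0 + 1)) y)) +
            (DirectSum.lof F ℕ (fun j => C (2 * j + 1)) 0)
              ((d (2 * 0 + 1)) ((G (2 * 0 + 1)) y)) +
            (DirectSum.lof F ℕ (fun j => C (2 * j + 1)) 0)
              ((G (2 * 0)) ((d (2 * 0)) y)) =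
          (DirectSum.lof F ℕ (fun j => C (2 * j + 1)) 0) y +
            (DirectSum.lof F ℕ (fun j => C (2 * j + 1)) (0 + 1))
              ((G (2 * (0 + 1))) ((G (2 * 0 + 1)) y)) := by
        rw [add_assoc, hbc, add_comm]
      exact main
    | (k + 1), y =>
      simp only [pgMap, qgMap, noMap, pgComp, qgComp, DirectSum.toModule_lof, map_add,
        LinearMap.add_apply, LinearMap.comp_apply, LinearMap.id_apply]
      have h1 : (d (2 * (k + 1) + 1)) ((G (2 * (k + 1) + 1)) y) +
          (G (2 * (k + 1))) ((d (2 * (k + 1))) y) = y := by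
        have := LinearMap.congr_fun (hG (2 * (k + 1))) y
        simpa using this
      have hcc : (d (2 * k + 1)) ((d (2 * (k + 1))) y) = 0 := by
        have := LinearMap.congr_fun (hcomplex (2 * k + 1)) y
        simp at this
        exact this
      have hbc :
          (DirectSum.lof F ℕ (fun j => C (2 * j + 1)) (k + 1))
              ((d (2 * (k + 1) + 1)) ((G (2 * (k + 1) + 1)) y)) +
            (DirectSum.lof F ℕ (fun j => C (2 * j + 1)) (k + 1))
              ((G (2 * (k + 1))) ((d (2 * (k + 1))) y)) =
          (DirectSum.lof F ℕ (fun j => C (2 * j + 1)) (k + 1)) y := by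
        rw [← map_add]
        exact congrArg _ h1
      have main :
          (DirectSum.lof F ℕ (fun j => C (2 * j + 1)) (k + 1 + 1))
              ((G (2 * (k + 1 + 1))) ((G (2 * (k + 1) + 1)) y)) +
            (DirectSum.lof F ℕ (fun j => C (2 * j + 1)) (k + 1))
              ((d (2 * (k + 1) + 1)) ((G (2 * (k + 1) + 1)) y)) +
            ((DirectSum.lof F ℕ (fun j => C (2 * j + 1)) (k + 1))
                ((G (2 * (k + 1))) ((d (2 * (k + 1))) y)) +
              (DirectSum.lof F ℕ (fun j => C (2 * j + 1)) k)
                ((d (2 * k + 1)) ((d (2 * (k + 1))) y))) =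
          (DirectSum.lof F ℕ (fun j => C (2 * j + 1)) (k + 1)) y +
            (DirectSum.lof F ℕ (fun j => C (2 * j + 1)) (k + 1 + 1))
              ((G (2 * (k + 1 + 1))) ((G (2 * (k + 1) + 1)) y)) := by
        rw [hcc, map_zero, add_zero, add_assoc, hbc, add_comm]
      exact main
  have nilE : ∀ m k (x : C (2 * k)), n < 2 * (k + m) →
      ((neMap F C G) ^ m) ((DirectSum.lof F ℕ (fun j => C (2 * j)) k) x) = 0 := by
    intro m
    induction m with
    | zero =>
      intro k x hk
      have : Subsingleton (C (2 * k)) := hbdd _ (by omega)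
      simp [Subsingleton.elim x 0]
    | succ m ih =>
      intro k x hk
      rw [pow_succ, Module.End.mul_apply]
      have hne : (neMap F C G) ((DirectSum.lof F ℕ (fun j => C (2 * j)) k) x)
          = (DirectSum.lof F ℕ (fun j => C (2 * j)) (k + 1))
              ((G (2 * k + 1)) ((G (2 * k)) x)) := by
        simp only [neMap, DirectSum.toModule_lof, LinearMap.comp_apply]
        try rfl
      rw [hne]
      exact ih (k + 1) _ (by omega)
  have nilO : ∀ m k (y : C (2 * k + 1)), n < 2 * (k + m) + 1 →
      ((noMap F C G) ^ m) ((DirectSum.lof F ℕ (fun j => C (2 * j + 1)) k) y) = 0 := by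
    intro m
    induction m with
    | zero =>
      intro k y hk
      have : Subsingleton (C (2 * k + 1)) := hbdd _ (by omega)
      simp [Subsingleton.elim y 0]
    | succ m ih =>
      intro k y hk
      rw [pow_succ, Module.End.mul_apply]
      have hno : (noMap F C G) ((DirectSum.lof F ℕ (fun j => C (2 * j + 1)) k) y)
          = (DirectSum.lof F ℕ (fun j => C (2 * j + 1)) (k + 1))
              ((G (2 * (k + 1))) ((G (2 * k + 1)) y)) := by
        simp only [noMap, DirectSum.toModule_lof, LinearMap.comp_apply]
        try rfl
      rw [hno]
      exact ih (k + 1) _ (by omega)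
  have hNe : IsNilpotent (neMap F C G) := by
    refine ⟨n + 1, ?_⟩
    apply DirectSum.linearMap_ext
    intro k
    ext x : 1
    simpa using nilE (n + 1) k x (by omega)
  have hNo : IsNilpotent (noMap F C G) := by
    refine ⟨n + 1, ?_⟩
    apply DirectSum.linearMap_ext
    intro k
    ext y : 1
    simpa using nilO (n + 1) k y (by omega)
  have hbij1 : Function.Bijective ((qgMap F C d G).comp (pgMap F C d G)) := by
    rw [key1]
    exact (Module.End.isUnit_iff _).mp (by exact hNe.isUnit_one_add)
  have hbij2 : Function.Bijective ((pgMap F C d G).comp (qgMap F C d G)) := by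
    rw [key2]
    exact (Module.End.isUnit_iff _).mp (by exact hNo.isUnit_one_add)
  constructor
  · have := hbij1.injective
    rw [LinearMap.coe_comp] at this
    exact Function.Injective.of_comp this
  · have := hbij2.surjective
    rw [LinearMap.coe_comp] at this
    exact Function.Surjective.of_comp this
end

section
/- Let F = ℚ(t), ∂₂ : F³ → F⁴ given by the matrix [[-t,-1,0],[1,1,1],[0,-t,-1],[-1,0,-t]], and ∂₁ : F⁴ → F given by [1-t, 1-t², 1-t, 1-t]. Then the complex 0 → F³ → F⁴ → F → 0 is exact: ∂₂ is injective, ker ∂₁ = im ∂₂, and ∂₁ is surjective. -/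
/-- The generator `t` of the rational function field `ℚ(t)`. -/
noncomputable def t : RatFunc ℚ := RatFunc.X

/-- The boundary map `∂₂` of the Morse–Smale complex of the trefoil exterior. -/
noncomputable def D2 : Matrix (Fin 4) (Fin 3) (RatFunc ℚ) :=
  !![-t, -1, 0; 1, 1, 1; 0, -t, -1; -1, 0, -t]

/-- The boundary map `∂₁`. -/
noncomputable def D1 : Matrix (Fin 1) (Fin 4) (RatFunc ℚ) :=
  !![1 - t, 1 - t ^ 2, 1 - t, 1 - t]

/-!
Over a field, a complex `0 → V₁ → V₂ → V₃ → 0` with injective first map, surjective last map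
and `dim V₁ + dim V₃ = dim V₂` is exact in the middle, by rank–nullity. Here `∂₁ ∂₂ = 0` is a
direct computation, `∂₁` is surjective because its entry `1 - t` is a unit, and `∂₂` is injective
because its first three rows form a matrix of determinant `-(1 - t + t²) ≠ 0`; the dimensions are
`3 + 1 = 4`.
-/

open Module Polynomial

theorem LinearMap.ker_eq_range_of_finrank_add_finrank_eq {K V₁ V₂ V₃ : Type*} [DivisionRing K]
    [AddCommGroup V₁] [Module K V₁] [AddCommGroup V₂] [Module K V₂] [AddCommGroup V₃]
    [Module K V₃] [FiniteDimensional K V₂] {f : V₁ →ₗ[K] V₂} {g : V₂ →ₗ[K] V₃}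
    (hgf : g ∘ₗ f = 0) (hf : Function.Injective f) (hg : Function.Surjective g)
    (hdim : finrank K V₁ + finrank K V₃ = finrank K V₂) :
    LinearMap.ker g = LinearMap.range f := by
  have hrange : finrank K (LinearMap.range f) = finrank K V₁ := LinearMap.finrank_range_of_inj hf
  have hker := g.finrank_range_add_finrank_ker
  rw [LinearMap.range_eq_top.mpr hg, finrank_top] at hker
  refine (Submodule.eq_of_le_of_finrank_eq (LinearMap.range_le_ker_iff.mpr hgf) ?_).symm
  omega

theorem Matrix.mulVec_surjective_of_ne_zero {K m n : Type*} [DivisionRing K] [Unique m]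
    [Fintype n] [DecidableEq n] {A : Matrix m n K} {j : n} (hj : A default j ≠ 0) :
    Function.Surjective A.mulVec := by
  intro y
  refine ⟨Pi.single j ((A default j)⁻¹ * y default), funext fun i => ?_⟩
  rw [Subsingleton.elim i default]
  simp [hj]

theorem Matrix.mulVec_injective_of_isUnit_submatrix {K m n : Type*} [Field K] [Fintype n]
    [DecidableEq n] {A : Matrix m n K} (e : n → m) (he : IsUnit (A.submatrix e id)) :
    Function.Injective A.mulVec :=
  fun _ _ hvw => Matrix.mulVec_injective_iff_isUnit.mpr he (congrArg (· ∘ e) hvw)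

theorem t_eq_algebraMap : t = algebraMap ℚ[X] (RatFunc ℚ) X := RatFunc.algebraMap_X.symm

theorem one_sub_t_ne_zero : 1 - t ≠ 0 := by
  have hp : (1 - X : ℚ[X]) ≠ 0 := fun h => by simpa using congrArg (coeff · 0) h
  simpa [t_eq_algebraMap] using RatFunc.algebraMap_ne_zero hp

theorem one_sub_t_add_t_sq_ne_zero : 1 - t + t ^ 2 ≠ 0 := by
  have hp : (1 - X + X ^ 2 : ℚ[X]) ≠ 0 := fun h => by simpa using congrArg (coeff · 0) h
  simpa [t_eq_algebraMap] using RatFunc.algebraMap_ne_zero hp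

theorem D1_mul_D2 : D1 * D2 = 0 := by
  ext i j
  fin_cases i; fin_cases j <;> simp [D1, D2, Matrix.mul_apply, Fin.sum_univ_four] <;> ring

theorem det_D2_submatrix_castSucc : (D2.submatrix Fin.castSucc id).det = -(1 - t + t ^ 2) := by
  rw [Matrix.det_fin_three]
  simp [D2]
  ring

/-- The complex `0 → ℚ(t)³ → ℚ(t)⁴ → ℚ(t) → 0` of the trefoil is exact. -/
theorem stmt_5 :
    Function.Injective D2.mulVecLin ∧
    LinearMap.ker D1.mulVecLin = LinearMap.range D2.mulVecLin ∧
    Function.Surjective D1.mulVecLin := by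
  have hD2 : Function.Injective D2.mulVecLin := by
    refine Matrix.mulVec_injective_of_isUnit_submatrix Fin.castSucc ?_
    rw [Matrix.isUnit_iff_isUnit_det, det_D2_submatrix_castSucc]
    exact (neg_ne_zero.mpr one_sub_t_add_t_sq_ne_zero).isUnit
  have hD1 : Function.Surjective D1.mulVecLin :=
    Matrix.mulVec_surjective_of_ne_zero (j := 0) (by simpa [D1] using one_sub_t_ne_zero)
  refine ⟨hD2, LinearMap.ker_eq_range_of_finrank_add_finrank_eq ?_ hD2 hD1 ?_, hD1⟩
  · rw [← Matrix.mulVecLin_mul, D1_mul_D2, Matrix.mulVecLin_zero]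
  · simp
end

section
/- Let F = ℚ(t) and define G₂ : F⁴ → F³ by the matrix (1/(t²-t+1))·[[0,t²,t,t-1],[0,1,1-t,1],[0,-t,-1,-t]] and G₁ : F → F⁴ by the column (1/(1-t), 0, 0, 0)ᵀ, with ∂₂ : F³ → F⁴ given by [[-t,-1,0],[1,1,1],[0,-t,-1],[-1,0,-t]] and ∂₁ : F⁴ → F given by [1-t,1-t²,1-t,1-t]. Then G₂∘∂₂ = id_{F³}, ∂₂∘G₂ + G₁∘∂₁ = id_{F⁴}, and ∂₁∘G₁ = id_F. -/
set_option synthInstance.maxHeartbeats 400000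

/-- The propagator map `G₂ : ℚ(t)⁴ → ℚ(t)³`. -/
noncomputable def G2 : Matrix (Fin 3) (Fin 4) (RatFunc ℚ) :=
  (t ^ 2 - t + 1)⁻¹ • !![0, t ^ 2, t, t - 1; 0, 1, 1 - t, 1; 0, -t, -1, -t]

/-- The propagator map `G₁ : ℚ(t) → ℚ(t)⁴`. -/
noncomputable def G1 : Matrix (Fin 4) (Fin 1) (RatFunc ℚ) :=
  !![(1 - t)⁻¹; 0; 0; 0]


lemma ht1 : (1 - t) ≠ 0 := by
  have : t = algebraMap (Polynomial ℚ) (RatFunc ℚ) Polynomial.X := (RatFunc.algebraMap_X).symm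
  rw [this, show (1 : RatFunc ℚ) = algebraMap (Polynomial ℚ) (RatFunc ℚ) 1 from (map_one _).symm,
    ← map_sub]
  apply RatFunc.algebraMap_ne_zero
  intro h
  have := congrArg (fun p => Polynomial.coeff p 1) h
  simp [Polynomial.coeff_one, Polynomial.coeff_X] at this

lemma ht2 : (t ^ 2 - t + 1) ≠ 0 := by
  have : t = algebraMap (Polynomial ℚ) (RatFunc ℚ) Polynomial.X := (RatFunc.algebraMap_X).symm
  rw [this, show (1 : RatFunc ℚ) = algebraMap (Polynomial ℚ) (RatFunc ℚ) 1 from (map_one _).symm,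
    ← map_pow, ← map_sub, ← map_add]
  apply RatFunc.algebraMap_ne_zero
  intro h
  have := congrArg (fun p => Polynomial.coeff p 2) h
  simp [Polynomial.coeff_one, Polynomial.coeff_X] at this

lemma ht2' : (1 - t + t ^ 2) ≠ 0 := by
  have := ht2; intro h; apply this; rw [← h]; ring

lemma m1 : G2 * D2 = 1 := by
  ext i j
  fin_cases i <;> fin_cases j <;>
    simp [G2, D2, Matrix.mul_apply, Fin.sum_univ_succ, Matrix.one_apply,
      Matrix.vecHead, Matrix.vecTail] <;>
    (try (have h1 := ht1; have h2 := ht2'; have h3 := ht2; have h4 : t * (t - 1) + 1 ≠ 0 := (by intro h; apply ht2; rw [← h]; ring); field_simp)) <;>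
    first | ring1 | tauto

lemma m3 : D1 * G1 = 1 := by
  ext i j
  fin_cases i <;> fin_cases j <;>
    simp [G1, D1, Matrix.mul_apply, Fin.sum_univ_succ, Matrix.one_apply,
      mul_inv_cancel₀ ht1]

set_option maxHeartbeats 2000000 in
lemma m2 : D2 * G2 + G1 * D1 = 1 := by
  ext i j
  fin_cases i <;> fin_cases j <;>
    simp [G1, G2, D1, D2, Matrix.mul_apply, Fin.sum_univ_succ, Matrix.one_apply,
      Matrix.vecHead, Matrix.vecTail] <;>
    (try (have h1 := ht1; have h2 := ht2'; have h3 := ht2; have h4 : t * (t - 1) + 1 ≠ 0 := (by intro h; apply ht2; rw [← h]; ring); field_simp)) <;>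
    first | ring1 | tauto

/-- `(G₂, G₁)` is a combinatorial propagator for the Morse–Smale complex
of the trefoil exterior: `G₂∂₂ = id`, `∂₂G₂ + G₁∂₁ = id`, `∂₁G₁ = id`. -/
theorem stmt_8 :
    G2.mulVecLin.comp D2.mulVecLin = LinearMap.id ∧
    D2.mulVecLin.comp G2.mulVecLin + G1.mulVecLin.comp D1.mulVecLin = LinearMap.id ∧
    D1.mulVecLin.comp G1.mulVecLin = LinearMap.id := by
  refine ⟨?_, ?_, ?_⟩
  · rw [← Matrix.mulVecLin_mul, m1, Matrix.mulVecLin_one]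
  · rw [← Matrix.mulVecLin_mul, ← Matrix.mulVecLin_mul, ← Matrix.mulVecLin_add, m2,
      Matrix.mulVecLin_one]
  · rw [← Matrix.mulVecLin_mul, m3, Matrix.mulVecLin_one]
end

section
/- Let F be a field and 0 → C₂ → C₁ → C₀ → 0 an exact complex of finite-dimensional F-vector spaces with combinatorial propagators (G₂,G₁) and (G₂',G₁'). Then there exist linear maps H such that G₁' - G₁ = ∂₂ ∘ H for some H : C₀ → C₂; consequently det(∂₂ ⊕ G₁') = det(∂₂ ⊕ G₁) for any fixed bases of C₂ ⊕ C₀ and C₁. -/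
/-- For an exact complex `0 → C₂ → C₁ → C₀ → 0` with two combinatorial
propagators `(G₂,G₁)` and `(G₂',G₁')`, the difference `G₁' - G₁` factors as
`∂₂ ∘ H` for some `H : C₀ → C₂`; consequently the determinants of
`∂₂ ⊕ G₁'` and `∂₂ ⊕ G₁` agree for any fixed bases. -/
theorem stmt_16 (F : Type*) [Field F]
    (C2 C1 C0 : Type*)
    [AddCommGroup C2] [Module F C2] [FiniteDimensional F C2]
    [AddCommGroup C1] [Module F C1] [FiniteDimensional F C1]
    [AddCommGroup C0] [Module F C0] [FiniteDimensional F C0]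
    (d2 : C2 →ₗ[F] C1) (d1 : C1 →ₗ[F] C0)
    (hcomplex : d1.comp d2 = 0)
    (hinj : Function.Injective d2)
    (hexact : LinearMap.ker d1 = LinearMap.range d2)
    (hsurj : Function.Surjective d1)
    (G2 : C1 →ₗ[F] C2) (G1 : C0 →ₗ[F] C1)
    (hG2 : G2.comp d2 = LinearMap.id)
    (hG1 : d2.comp G2 + G1.comp d1 = LinearMap.id)
    (hG0 : d1.comp G1 = LinearMap.id)
    (G2' : C1 →ₗ[F] C2) (G1' : C0 →ₗ[F] C1)
    (hG2' : G2'.comp d2 = LinearMap.id)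
    (hG1' : d2.comp G2' + G1'.comp d1 = LinearMap.id)
    (hG0' : d1.comp G1' = LinearMap.id) :
    (∃ H : C0 →ₗ[F] C2, G1' - G1 = d2.comp H) ∧
      ∀ (ι : Type) (_ : Fintype ι) (_ : DecidableEq ι)
        (b : Module.Basis ι F (C2 × C0)) (c : Module.Basis ι F C1),
        (LinearMap.toMatrix b c (LinearMap.coprod d2 G1')).det =
          (LinearMap.toMatrix b c (LinearMap.coprod d2 G1)).det := by
  set H : C0 →ₗ[F] C2 := G2.comp (G1' - G1) with hHdef
  have key : ∀ y, d2 (H y) = G1' y - G1 y := by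
    intro y
    have h1 := congrFun (congrArg DFunLike.coe hG1) (G1' y - G1 y)
    have ha := congrFun (congrArg DFunLike.coe hG0) y
    have hb := congrFun (congrArg DFunLike.coe hG0') y
    simp only [LinearMap.comp_apply, LinearMap.add_apply, LinearMap.id_apply] at h1 ha hb
    have h2 : d1 (G1' y - G1 y) = 0 := by
      rw [map_sub, ha, hb, sub_self]
    rw [h2, map_zero, add_zero] at h1
    simpa [hHdef, LinearMap.comp_apply] using h1
  have keyC : d2.comp H = G1' - G1 := by
    ext y; simpa using key y
  refine ⟨⟨H, keyC.symm⟩, ?_⟩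
  intro ι _ _ b c
  set T : (C2 × C0) →ₗ[F] (C2 × C0) :=
    LinearMap.prod (LinearMap.fst F C2 C0 + H.comp (LinearMap.snd F C2 C0))
      (LinearMap.snd F C2 C0) with hTdef
  have hcomp : LinearMap.coprod d2 G1' = (LinearMap.coprod d2 G1).comp T := by
    ext y
    · simp [hTdef]
    · simp only [hTdef, LinearMap.comp_apply, LinearMap.coprod_apply,
        LinearMap.prod_apply, LinearMap.inr_apply, Function.prod, LinearMap.add_apply,
        LinearMap.fst_apply, LinearMap.snd_apply, map_add, map_zero, zero_add,
        key y]
      abel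
  have hdetT : LinearMap.det T = 1 := by
    let b2 := Module.finBasis F C2
    let b0 := Module.finBasis F C0
    let p := b2.prod b0
    rw [← LinearMap.det_toMatrix p]
    have hm : LinearMap.toMatrix p p T =
        Matrix.fromBlocks 1 (LinearMap.toMatrix b0 b2 H) 0 1 := by
      ext k l
      rcases k with k | k <;> rcases l with l | l <;>
        simp [LinearMap.toMatrix_apply, p, Module.Basis.prod_apply, hTdef,
          Module.Basis.prod_repr_inl, Module.Basis.prod_repr_inr, Matrix.fromBlocks,
          Matrix.one_apply, Finsupp.single_apply, eq_comm]
    rw [hm, Matrix.det_fromBlocks_zero₂₁]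
    simp
  rw [hcomp, LinearMap.toMatrix_comp b b c, Matrix.det_mul,
    LinearMap.det_toMatrix b T, hdetT, mul_one]
end
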